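/- MWU produces ε-feasible solutions to LP feasibility (Theorem 2 of the paper, feasible case): let A ∈ ℝ^{m×n}, b ∈ ℝ^m with m ≥ 2, let ρ > 0 and 0 < ε ≤ ρ, and set η = ε/(2ρ). Let x^(0), …, x^(T−1) ∈ ℝ^n be vectors with x^(t) ≥ 0 componentwise such that, for every t and every j ∈ {1,…,m}, A_j x^(t) − b_j ∈ [−ρ, ρ], and define the cost vectors m^(t)_j = (A_j x^(t) − b_j)/ρ together with the MWU weights and probabilities p^(t) for these costs. Assume the oracle condition Σ_{j=1}^{m} p^(t)_j · (A_j x^(t) − b_j) ≥ 0 holds for every t < T. If T ≥ 4·ρ²·(ln m)/ε², then the averaged point x̄ = (1/T) Σ_{t=0}^{T−1} x^(t) is ε-feasible for the system, i.e., x̄ ≥ 0 and A_j x̄ ≥ b_j − ε for every j ∈ {1,…,m}. -/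

import Mathlib

open Finset

lemma key_exp {z : ℝ} (h1 : -(1/2) ≤ z) (h2 : z ≤ 1/2) : Real.exp (-z - z^2) ≤ 1 - z := by
  have h1z : 0 < 1 - z := by linarith
  have hexp : 1 / (1 - z) ≤ Real.exp (z + z^2) := by
    rcases le_or_gt z 0 with hz | hz
    · have h := Real.add_one_le_exp (z + z^2)
      rw [div_le_iff₀ h1z]; nlinarith [sq_nonneg z]
    · have hzz : 0 ≤ z + z^2 := by nlinarith
      have h := Real.quadratic_le_exp_of_nonneg hzz
      rw [div_le_iff₀ h1z]
      nlinarith [sq_nonneg z, mul_pos hz hz, mul_pos (mul_pos hz hz) hz,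
        mul_le_mul_of_nonneg_right h h1z.le]
  calc Real.exp (-z - z^2) = (Real.exp (z+z^2))⁻¹ := by
        rw [← Real.exp_neg]; ring_nf
    _ ≤ (1/(1-z))⁻¹ := by gcongr
    _ = 1 - z := by field_simp

/-- Multiplicative Weights Update weights: `w^(0)_j = 1`,
`w^(t+1)_j = w^(t)_j * (1 - η * c^(t)_j)`. -/
noncomputable def mwuW (m : ℕ) (η : ℝ) (c : ℕ → Fin m → ℝ) : ℕ → Fin m → ℝ
  | 0 => fun _ => 1
  | (t + 1) => fun j => mwuW m η c t j * (1 - η * c t j)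

/-- MWU potential `Γ(t) = Σ_j w^(t)_j`. -/
noncomputable def mwuGamma (m : ℕ) (η : ℝ) (c : ℕ → Fin m → ℝ) (t : ℕ) : ℝ :=
  ∑ j, mwuW m η c t j

/-- MWU probabilities `p^(t)_j = w^(t)_j / Γ(t)`. -/
noncomputable def mwuP (m : ℕ) (η : ℝ) (c : ℕ → Fin m → ℝ) (t : ℕ) (j : Fin m) : ℝ :=
  mwuW m η c t j / mwuGamma m η c t

set_option maxHeartbeats 1600000 in
/-- MWU produces ε-feasible solutions to LP feasibility (feasible case of
Theorem 2): with `η = ε/(2ρ)` and `T ≥ 4ρ²(ln m)/ε²`, under the oracle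
condition the averaged point `x̄` satisfies `x̄ ≥ 0` and `A_j x̄ ≥ b_j − ε`
for every `j`. -/
theorem mwu_eps_feasible (m n : ℕ) (hm : 2 ≤ m)
    (A : Matrix (Fin m) (Fin n) ℝ) (b : Fin m → ℝ)
    (ρ ε : ℝ) (hρ : 0 < ρ) (hε0 : 0 < ε) (hε : ε ≤ ρ)
    (η : ℝ) (hη : η = ε / (2 * ρ))
    (T : ℕ) (hT : 4 * ρ ^ 2 * Real.log m / ε ^ 2 ≤ (T : ℝ))
    (x : ℕ → Fin n → ℝ)
    (hx : ∀ t < T, ∀ i, 0 ≤ x t i)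
    (hres : ∀ t < T, ∀ j, -ρ ≤ A.mulVec (x t) j - b j ∧ A.mulVec (x t) j - b j ≤ ρ)
    (c : ℕ → Fin m → ℝ)
    (hc : ∀ t j, c t j = (A.mulVec (x t) j - b j) / ρ)
    (horacle : ∀ t < T, 0 ≤ ∑ j, mwuP m η c t j * (A.mulVec (x t) j - b j))
    (xbar : Fin n → ℝ)
    (hxbar : xbar = fun i => (1 / (T : ℝ)) * ∑ t ∈ Finset.range T, x t i) :
    (∀ i, 0 ≤ xbar i) ∧ ∀ j, A.mulVec xbar j ≥ b j - ε := by
  -- basic positivity facts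
  have hm1 : (1:ℝ) < m := by
    have : (2:ℝ) ≤ m := by exact_mod_cast hm
    linarith
  have hlog : 0 < Real.log m := Real.log_pos hm1
  have hη0 : 0 < η := by rw [hη]; positivity
  have hηhalf : η ≤ 1/2 := by
    rw [hη, div_le_iff₀ (by positivity)]; linarith
  have hεη : ε = 2 * ρ * η := by rw [hη]; field_simp
  have hT0 : 0 < (T:ℝ) := by
    refine lt_of_lt_of_le ?_ hT
    exact div_pos (mul_pos (by positivity) hlog) (by positivity)
  -- bounds on costs
  have habc : ∀ t j, A.mulVec (x t) j - b j = ρ * c t j := by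
    intro t j; rw [hc t j]; field_simp
  have hcb : ∀ t, t < T → ∀ j, -1 ≤ c t j ∧ c t j ≤ 1 := by
    intro t ht j
    obtain ⟨h1, h2⟩ := hres t ht j
    rw [hc t j]
    constructor
    · rw [le_div_iff₀ hρ]; linarith
    · rw [div_le_one hρ]; linarith
  have hzb : ∀ t, t < T → ∀ j, -(1/2) ≤ η * c t j ∧ η * c t j ≤ 1/2 := by
    intro t ht j
    obtain ⟨h1, h2⟩ := hcb t ht j
    constructor
    · nlinarith
    · nlinarith
  -- weights positive
  have hWpos : ∀ t, t ≤ T → ∀ j, 0 < mwuW m η c t j := by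
    intro t
    induction t with
    | zero => intro _ j; simp [mwuW]
    | succ t ih =>
      intro ht j
      have ht' : t < T := ht
      have h := (hzb t ht' j).2
      have := ih (le_of_lt ht') j
      show 0 < mwuW m η c t j * (1 - η * c t j)
      have : 0 < 1 - η * c t j := by linarith
      positivity
  have hGpos : ∀ t, t ≤ T → 0 < mwuGamma m η c t := by
    intro t ht
    exact Finset.sum_pos (fun j _ => hWpos t ht j) ⟨⟨0, by omega⟩, mem_univ _⟩
  -- potential decreasing
  have hGmono : ∀ t, t < T → mwuGamma m η c (t+1) ≤ mwuGamma m η c t := by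
    intro t ht
    have hG := hGpos t (le_of_lt ht)
    have hwc : 0 ≤ ∑ j, mwuW m η c t j * c t j := by
      have h0 := horacle t ht
      have heq : ∑ j, mwuP m η c t j * (A.mulVec (x t) j - b j)
          = (ρ / mwuGamma m η c t) * ∑ j, mwuW m η c t j * c t j := by
        rw [Finset.mul_sum]
        refine Finset.sum_congr rfl fun j _ => ?_
        rw [mwuP, habc t j]
        field_simp
      rw [heq] at h0
      have hk : 0 < ρ / mwuGamma m η c t := by positivity
      nlinarith
    have heq : mwuGamma m η c (t+1)
        = mwuGamma m η c t - η * ∑ j, mwuW m η c t j * c t j := by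
      simp only [mwuGamma, Finset.mul_sum, ← Finset.sum_sub_distrib]
      refine Finset.sum_congr rfl fun j _ => ?_
      show mwuW m η c t j * (1 - η * c t j) = _
      ring
    rw [heq]
    nlinarith
  have hGle : ∀ t, t ≤ T → mwuGamma m η c t ≤ m := by
    intro t
    induction t with
    | zero => intro _; simp [mwuGamma, mwuW]
    | succ t ih =>
      intro ht
      have ht' : t < T := ht
      exact le_trans (hGmono t ht') (ih (le_of_lt ht'))
  constructor
  · intro i
    rw [hxbar]
    have : 0 ≤ ∑ t ∈ range T, x t i :=
      Finset.sum_nonneg fun t htm => hx t (mem_range.mp htm) i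
    positivity
  · intro j
    -- product lower bound on the weight
    have hprod : ∀ t, t ≤ T →
        Real.exp (∑ s ∈ range t, (-(η * c s j) - (η * c s j)^2)) ≤ mwuW m η c t j := by
      intro t
      induction t with
      | zero => intro _; simp [mwuW]
      | succ t ih =>
        intro ht
        have ht' : t < T := ht
        rw [Finset.sum_range_succ, Real.exp_add]
        have hkey := key_exp (hzb t ht' j).1 (hzb t ht' j).2
        show _ ≤ mwuW m η c t j * (1 - η * c t j)
        exact mul_le_mul (ih (le_of_lt ht')) hkey (Real.exp_pos _).le
          (hWpos t (le_of_lt ht') j).le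
    have hWle : mwuW m η c T j ≤ m :=
      le_trans (Finset.single_le_sum (f := fun j => mwuW m η c T j)
        (fun i _ => (hWpos T le_rfl i).le) (mem_univ j)) (hGle T le_rfl)
    have hSlog : ∑ s ∈ range T, (-(η * c s j) - (η * c s j)^2) ≤ Real.log m :=
      (Real.le_log_iff_exp_le (by positivity)).mpr (le_trans (hprod T le_rfl) hWle)
    obtain ⟨Sc, hSc⟩ : ∃ S : ℝ, S = ∑ t ∈ range T, c t j := ⟨_, rfl⟩
    have hSlb : -η * Sc - η^2 * T ≤ ∑ s ∈ range T, (-(η * c s j) - (η * c s j)^2) := by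
      have key : ∀ s ∈ range T, -η * c s j - η^2 ≤ -(η * c s j) - (η * c s j)^2 := by
        intro s hs
        have h := hcb s (mem_range.mp hs) j
        have hc2 : (c s j)^2 ≤ 1 := by nlinarith [h.1, h.2]
        nlinarith [mul_le_mul_of_nonneg_left hc2 (sq_nonneg η)]
      calc -η * Sc - η^2 * T = ∑ s ∈ range T, (-η * c s j - η^2) := by
            rw [Finset.sum_sub_distrib, Finset.sum_const, card_range, ← Finset.mul_sum,
              nsmul_eq_mul, hSc]
            ring
        _ ≤ _ := Finset.sum_le_sum key
    have hlogT : Real.log m ≤ η^2 * T := by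
      rw [div_le_iff₀ (by positivity)] at hT
      have hε2 : ε^2 = 4 * ρ^2 * η^2 := by rw [hεη]; ring
      rw [hε2] at hT
      nlinarith [mul_pos hρ hρ]
    have hScb : -2 * η * (T:ℝ) ≤ Sc := by
      have h5 : η * (-Sc) ≤ η * (2 * η * T) := by linarith [hSlb, hSlog, hlogT]
      have h6 := le_of_mul_le_mul_left h5 hη0
      linarith
    -- rewrite the averaged constraint value
    have h2 : A.mulVec xbar j = (1/(T:ℝ)) * ∑ t ∈ range T, A.mulVec (x t) j := by
      subst hxbar
      simp only [Matrix.mulVec, dotProduct, Finset.mul_sum]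
      rw [Finset.sum_comm]
      exact Finset.sum_congr rfl fun t _ => Finset.sum_congr rfl fun i _ => by ring
    have h3 : ∑ t ∈ range T, A.mulVec (x t) j = ρ * Sc + T * b j := by
      have : ∑ t ∈ range T, A.mulVec (x t) j
          = ∑ t ∈ range T, (ρ * c t j + b j) := by
        refine Finset.sum_congr rfl fun t _ => ?_
        have := habc t j
        linarith
      rw [this, Finset.sum_add_distrib, Finset.sum_const, card_range, ← Finset.mul_sum,
        nsmul_eq_mul, ← hSc]
    rw [ge_iff_le, h2, h3]
    have hdiff : (1/(T:ℝ)) * (ρ * Sc + T * b j) - (b j - ε) = (ρ * Sc + ε * T) / T := by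
      field_simp
      ring
    have hnum : 0 ≤ (ρ * Sc + ε * T) / T := by
      apply div_nonneg _ hT0.le
      have : ρ * (-2 * η * T) ≤ ρ * Sc := by
        exact mul_le_mul_of_nonneg_left hScb hρ.le
      nlinarith
    linarith
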